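/- The co-Zak transform Z (with parameter m = ℏ ∈ ℤ) intertwines the Schrödinger representation ρ_ℏ on Schwartz functions and the lattice representation ρ_m: for all (s,x,y), Z(ρ_ℏ(s,x,y)f)(u,v) = e^{2πim(s + x(v-y))} (Zf)(u-x, v-y). -/
import Mathlib


open Complex

/-- The Schrödinger representation [ρ_ℏ(s,x,y)f](t) = e^{2πiℏ(s-ty)} f(t-x). -/
noncomputable def schrodinger (ℏ : ℝ) (g : ℝ × ℝ × ℝ) (f : ℝ → ℂ) : ℝ → ℂ :=
  fun t => Complex.exp (2 * Real.pi * Complex.I * ℏ * (g.1 - t * g.2.2)) * f (t - g.2.1)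

/-- The co-Zak transform [Zf](u,v) = e^{2πimuv} Σ_{n∈ℤ} f(u+n) e^{2πimnv}. -/
noncomputable def coZak (m : ℤ) (f : ℝ → ℂ) (u v : ℝ) : ℂ :=
  Complex.exp (2 * Real.pi * Complex.I * m * u * v) *
    ∑' n : ℤ, f (u + n) * Complex.exp (2 * Real.pi * Complex.I * m * n * v)

/-- The co-Zak transform intertwines the Schrödinger representation ρ_ℏ (ℏ = m)
and the lattice representation ρ_m. -/
theorem coZak_intertwines (m : ℤ) (f : SchwartzMap ℝ ℂ) (s x y u v : ℝ) :
    coZak m (schrodinger (m : ℝ) (s, x, y) f) u v =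
      Complex.exp (2 * Real.pi * Complex.I * m * (s + x * (v - y))) *
        coZak m f (u - x) (v - y) := by
  unfold coZak schrodinger
  rw [← tsum_mul_left, ← tsum_mul_left, ← tsum_mul_left]
  refine tsum_congr fun n => ?_
  have harg : u + (n : ℝ) - x = u - x + (n : ℝ) := by ring
  simp only [harg]
  ring_nf
  conv_lhs => rw [← Complex.exp_add, mul_comm (Complex.exp _) (f _), mul_assoc,
    ← Complex.exp_add]
  conv_rhs => rw [mul_assoc, mul_assoc, ← Complex.exp_add, ← Complex.exp_add]
  congr 2
  push_cast
  ring
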